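/- arXiv:2212.02991 — 5 statements merged into one kernel-verified Lean document; each statement's English description precedes it below -/
import Mathlib

section
/- Let ρ ∈ C_c(ℝ^n), ρ ≢ 0, be symmetric and positive semi-definite, and assume there exists ρ^{1/2} ∈ C_c(ℝ^n) with ρ = ρ^{1/2} * ρ^{1/2}. On a compact Ω ⊂ ℝ^n, if a sequence of Radon measures μ^k converges weakly-* to μ in M(Ω), then ‖μ^k − μ‖_D → 0, where ‖ν‖_D² := ∫∫ ρ(x−y) dν(x) dν(y). -/
/-!
Let `Lₖ := sInt (μᵏ - μ)`, a continuous linear functional on bounded continuous functions, and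
`Φ y := ρ (· - y)`, so that `qForm ρ (μᵏ - μ) = Lₖ (Lₖ ∘ Φ)`. The sequence `Lₖ` is weak-* null,
hence bounded by Banach–Steinhaus, hence equicontinuous, so it tends to `0` uniformly on the
compact set `Φ '' (Ω - tsupport ρ)`. For `y ∉ Ω - tsupport ρ` the translate `Φ y` vanishes on `Ω`,
which carries all the measures, so `Lₖ (Φ y) = 0`. Hence `Lₖ ∘ Φ → 0` uniformly and
`|Lₖ (Lₖ ∘ Φ)| ≤ (supₖ ‖Lₖ‖) ‖Lₖ ∘ Φ‖ → 0`.
-/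

open MeasureTheory Filter Topology BoundedContinuousFunction Pointwise

/-- Integral of a real function against a finite signed (Radon) measure. -/
noncomputable def sInt {α : Type*} [MeasurableSpace α]
    (μ : SignedMeasure α) (f : α → ℝ) : ℝ :=
  (∫ x, f x ∂μ.toJordanDecomposition.posPart) -
  (∫ x, f x ∂μ.toJordanDecomposition.negPart)

/-- The quadratic form `‖ν‖_D² = ∫∫ ρ(x−y) dν(x) dν(y)`. -/
noncomputable def qForm {n : ℕ} (ρ : EuclideanSpace ℝ (Fin n) → ℝ)
    (ν : SignedMeasure (EuclideanSpace ℝ (Fin n))) : ℝ :=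
  sInt ν (fun y => sInt ν (fun x => ρ (x - y)))

section Equicontinuous

variable {ι X α : Type*} [TopologicalSpace X] [UniformSpace α]

theorem Equicontinuous.tendstoUniformlyOn_of_tendsto {F : ι → X → α} (hF : Equicontinuous F)
    {l : Filter ι} {f : X → α} (hlim : ∀ x, Tendsto (fun i => F i x) l (𝓝 (f x)))
    {K : Set X} (hK : IsCompact K) : TendstoUniformlyOn F f l K := by
  have : CompactSpace K := isCompact_iff_compactSpace.mp hK
  rw [tendstoUniformlyOn_iff_tendstoUniformly_comp_coe]
  exact UniformFun.tendsto_iff_tendstoUniformly.mp <|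
    (((equicontinuous_restrict_iff F).mpr (hF.equicontinuousOn K)).tendsto_uniformFun_iff_pi
      l _).mpr (tendsto_pi_nhds.mpr fun x => hlim x)

end Equicontinuous

namespace ContinuousLinearMap

variable {𝕜 V W : Type*} [NontriviallyNormedField 𝕜] [NormedAddCommGroup V] [NormedSpace 𝕜 V]
  [CompleteSpace V] [NormedAddCommGroup W] [NormedSpace 𝕜 W]
  {T : ℕ → V →L[𝕜] W} {T₀ : V → W}

theorem exists_norm_le_of_tendsto_apply (hT : ∀ v, Tendsto (fun k => T k v) atTop (𝓝 (T₀ v))) :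
    ∃ C, ∀ k, ‖T k‖ ≤ C :=
  banach_steinhaus fun v => by
    obtain ⟨C, hC⟩ := (hT v).norm.bddAbove_range
    exact ⟨C, fun k => hC ⟨k, rfl⟩⟩

theorem tendstoUniformlyOn_of_tendsto_apply
    (hT : ∀ v, Tendsto (fun k => T k v) atTop (𝓝 (T₀ v))) {K : Set V} (hK : IsCompact K) :
    TendstoUniformlyOn (fun k => ⇑(T k)) T₀ atTop K :=
  have hequi : Equicontinuous (fun k => ⇑(T k)) :=
    ((NormedSpace.equicontinuous_TFAE T).out 5 1).mp (exists_norm_le_of_tendsto_apply hT)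
  hequi.tendstoUniformlyOn_of_tendsto hT hK

theorem tendsto_compLeftContinuousBounded_of_tendsto_apply_zero {X : Type*} [TopologicalSpace X]
    (hT : ∀ v, Tendsto (fun k => T k v) atTop (𝓝 0)) (Φ : X →ᵇ V) {K : Set X}
    (hK : IsCompact K) (hΦ : ∀ k, ∀ y ∉ K, T k (Φ y) = 0) :
    Tendsto (fun k => (T k).compLeftContinuousBounded X Φ) atTop (𝓝 0) := by
  have hunifK : TendstoUniformlyOn (fun k y => T k (Φ y)) 0 atTop K :=
    ((tendstoUniformlyOn_of_tendsto_apply (T₀ := 0) hT (hK.image Φ.continuous)).comp Φ).mono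
      (Set.subset_preimage_image Φ K)
  rw [tendsto_iff_tendstoUniformly]
  intro u hu
  filter_upwards [hunifK u hu] with k hk y
  by_cases hy : y ∈ K
  · exact hk y hy
  · simpa [hΦ k y hy] using refl_mem_uniformity hu

end ContinuousLinearMap

section SignedIntegral

variable {α : Type*} [MeasurableSpace α]

theorem sInt_eq_integral_sub_integral {s : SignedMeasure α} {P N : Measure α}
    [IsFiniteMeasure P] [IsFiniteMeasure N] (hs : s = P.toSignedMeasure - N.toSignedMeasure)
    {f : α → ℝ} (hf : ∀ (Q : Measure α) [IsFiniteMeasure Q], Integrable f Q) :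
    sInt s f = ∫ x, f x ∂P - ∫ x, f x ∂N := by
  set J := s.toJordanDecomposition
  have hJ : J.posPart + N = P + J.negPart := by
    refine Measure.toSignedMeasure_eq_toSignedMeasure_iff.mp ?_
    rw [Measure.toSignedMeasure_add, Measure.toSignedMeasure_add]
    exact sub_eq_sub_iff_add_eq_add.mp (s.toSignedMeasure_toJordanDecomposition.trans hs)
  have h := congrArg (fun Q => ∫ x, f x ∂Q) hJ
  simp only [integral_add_measure (hf _) (hf _)] at h
  rw [sInt]
  linarith

theorem sInt_sub (a b : SignedMeasure α) {f : α → ℝ}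
    (hf : ∀ (Q : Measure α) [IsFiniteMeasure Q], Integrable f Q) :
    sInt (a - b) f = sInt a f - sInt b f := by
  set A := a.toJordanDecomposition
  set B := b.toJordanDecomposition
  have hab : a - b = (A.posPart + B.negPart).toSignedMeasure
      - (A.negPart + B.posPart).toSignedMeasure := by
    conv_lhs => rw [← a.toSignedMeasure_toJordanDecomposition,
      ← b.toSignedMeasure_toJordanDecomposition]
    simp only [JordanDecomposition.toSignedMeasure, Measure.toSignedMeasure_add, A, B]
    abel
  rw [sInt_eq_integral_sub_integral hab hf, integral_add_measure (hf _) (hf _),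
    integral_add_measure (hf _) (hf _), sInt, sInt]
  ring

theorem sInt_eq_zero_of_eqOn_zero {s : SignedMeasure α} {Ω : Set α}
    (hs : s.totalVariation Ωᶜ = 0) {f : α → ℝ} (hf : Set.EqOn f 0 Ω) : sInt s f = 0 := by
  rw [SignedMeasure.totalVariation, Measure.add_apply, add_eq_zero] at hs
  have hzero : ∀ P : Measure α, P Ωᶜ = 0 → ∫ x, f x ∂P = 0 := fun P hP =>
    integral_eq_zero_of_ae <| Filter.mem_of_superset (compl_compl Ω ▸ compl_mem_ae_iff.mpr hP) hf
  rw [sInt, hzero _ hs.1, hzero _ hs.2, sub_zero]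

end SignedIntegral

section SignedIntegralCLM

variable {X : Type*} [MeasurableSpace X] [TopologicalSpace X] [OpensMeasurableSpace X]

theorem abs_sInt_le (ν : SignedMeasure X) (f : X →ᵇ ℝ) :
    |sInt ν f| ≤ ν.totalVariation.real Set.univ * ‖f‖ := by
  set J := ν.toJordanDecomposition
  have hP := f.norm_integral_le_mul_norm J.posPart
  have hN := f.norm_integral_le_mul_norm J.negPart
  rw [SignedMeasure.totalVariation, measureReal_add_apply]
  rw [Real.norm_eq_abs] at hP hN
  calc |sInt ν f| ≤ |∫ x, f x ∂J.posPart| + |∫ x, f x ∂J.negPart| := abs_sub _ _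
    _ ≤ _ := by linarith

noncomputable def sIntCLM (ν : SignedMeasure X) : (X →ᵇ ℝ) →L[ℝ] ℝ :=
  LinearMap.mkContinuous
    { toFun := fun f => sInt ν f
      map_add' := fun f g => by
        simp only [sInt, coe_add, Pi.add_apply]
        rw [integral_add (f.integrable _) (g.integrable _),
          integral_add (f.integrable _) (g.integrable _)]
        ring
      map_smul' := fun c f => by
        simp only [sInt, coe_smul, RingHom.id_apply]
        rw [integral_smul, integral_smul, smul_sub] }
    _ (abs_sInt_le ν)

@[simp]
theorem sIntCLM_apply (ν : SignedMeasure X) (f : X →ᵇ ℝ) : sIntCLM ν f = sInt ν f := rfl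

theorem sIntCLM_sub (a b : SignedMeasure X) : sIntCLM (a - b) = sIntCLM a - sIntCLM b := by
  ext f
  exact sInt_sub a b fun Q _ => f.integrable Q

end SignedIntegralCLM

namespace BoundedContinuousFunction

variable {E β : Type*} [SeminormedAddCommGroup E] [SeminormedAddCommGroup β]

def translate (f : E →ᵇ β) (y : E) : E →ᵇ β :=
  f.compContinuous ⟨(· - y), by fun_prop⟩

theorem uniformContinuous_translate {f : E →ᵇ β} (hf : UniformContinuous f) :
    UniformContinuous f.translate := by
  refine Metric.uniformContinuous_iff.mpr fun ε hε => ?_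
  obtain ⟨δ, hδ, hfδ⟩ := Metric.uniformContinuous_iff.mp hf (ε / 2) (half_pos hε)
  refine ⟨δ, hδ, fun {y y'} hyy' => ?_⟩
  refine ((dist_le (f := f.translate y) (g := f.translate y') (half_pos hε).le).mpr
    fun x => (hfδ ?_).le).trans_lt (half_lt_self hε)
  show dist (x - y) (x - y') < δ
  rwa [dist_sub_left]

noncomputable def translates (f : E →ᵇ β) (hf : UniformContinuous f) : E →ᵇ (E →ᵇ β) :=
  ofNormedAddCommGroup f.translate (uniformContinuous_translate hf).continuous ‖f‖
    fun _ => norm_compContinuous_le _ _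
end BoundedContinuousFunction

theorem qForm_eq_sIntCLM_translates {n : ℕ} (ρ : EuclideanSpace ℝ (Fin n) →ᵇ ℝ)
    (hρ : UniformContinuous ρ) (ν : SignedMeasure (EuclideanSpace ℝ (Fin n))) :
    qForm ρ ν = sIntCLM ν ((sIntCLM ν).compLeftContinuousBounded _ (translates ρ hρ)) :=
  rfl

theorem weakstar_to_Dnorm_general
    (n : ℕ) (ρ : EuclideanSpace ℝ (Fin n) → ℝ)
    (hρc : Continuous ρ) (hρsupp : HasCompactSupport ρ)
    (Ω : Set (EuclideanSpace ℝ (Fin n))) (hΩ : IsCompact Ω)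
    (μseq : ℕ → SignedMeasure (EuclideanSpace ℝ (Fin n)))
    (μ : SignedMeasure (EuclideanSpace ℝ (Fin n)))
    (hsuppk : ∀ k, (μseq k).totalVariation Ωᶜ = 0)
    (hsuppμ : μ.totalVariation Ωᶜ = 0)
    (hweak : ∀ φ : EuclideanSpace ℝ (Fin n) → ℝ, Continuous φ →
      Tendsto (fun k => sInt (μseq k) φ) atTop (nhds (sInt μ φ))) :
    Tendsto (fun k => Real.sqrt (qForm ρ (μseq k - μ))) atTop (nhds 0) := by
  set ρb := ofCompactSupport ρ hρc hρsupp
  have hρu : UniformContinuous ρb := hρsupp.uniformContinuous_of_continuous hρc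
  set Φ := translates ρb hρu
  set L := fun k => sIntCLM (μseq k - μ)
  have hL : ∀ f, Tendsto (fun k => L k f) atTop (𝓝 0) := fun f => by
    simpa [L, sIntCLM_sub] using (hweak f f.continuous).sub_const (sInt μ f)
  have hLΦ : ∀ k, ∀ y ∉ Ω - tsupport ρ, L k (Φ y) = 0 := by
    intro k y hy
    have hΦy : Set.EqOn (Φ y) 0 Ω := fun x hx =>
      show ρ (x - y) = 0 from
        image_eq_zero_of_notMem_tsupport fun hxy => hy ⟨x, hx, x - y, hxy, sub_sub_cancel x y⟩
    simp [L, sIntCLM_sub, sInt_eq_zero_of_eqOn_zero (hsuppk k) hΦy,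
      sInt_eq_zero_of_eqOn_zero hsuppμ hΦy]
  have hK : IsCompact (Ω - tsupport ρ) :=
    sub_eq_add_neg Ω (tsupport ρ) ▸ hΩ.add (IsCompact.neg hρsupp)
  have hψ : Tendsto (fun k => (L k).compLeftContinuousBounded _ Φ) atTop (𝓝 0) :=
    ContinuousLinearMap.tendsto_compLeftContinuousBounded_of_tendsto_apply_zero hL Φ hK hLΦ
  obtain ⟨C, hC⟩ := ContinuousLinearMap.exists_norm_le_of_tendsto_apply (T₀ := 0) hL
  have hq : Tendsto (fun k => qForm ρ (μseq k - μ)) atTop (𝓝 0) := by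
    simp only [show ρ = ρb from rfl, qForm_eq_sIntCLM_translates ρb hρu]
    refine squeeze_zero_norm (fun k => (L k).le_of_opNorm_le (hC k) _) ?_
    simpa using hψ.norm.const_mul C
  simpa using hq.sqrt

/-- with `ρ = ρ^{1/2} * ρ^{1/2}` for `ρ^{1/2} ∈ C_c(ℝⁿ)`, weak-*
convergence `μ^k ⇀* μ` in `M(Ω)` implies `‖μ^k − μ‖_D → 0`. -/
theorem weakstar_to_Dnorm
    (n : ℕ) (ρ ρhalf : EuclideanSpace ℝ (Fin n) → ℝ)
    (hρc : Continuous ρ) (hρsupp : HasCompactSupport ρ) (hρne : ρ ≠ 0)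
    (hρsym : ∀ x, ρ (-x) = ρ x)
    (hreal : ∀ ξ, (FourierTransform.fourier (fun x => (ρ x : ℂ)) ξ).im = 0)
    (hpos : ∀ ξ, 0 ≤ (FourierTransform.fourier (fun x => (ρ x : ℂ)) ξ).re)
    (hhc : Continuous ρhalf) (hhsupp : HasCompactSupport ρhalf)
    (hsplit : ∀ x, ρ x = ∫ y, ρhalf y * ρhalf (x - y))
    (Ω : Set (EuclideanSpace ℝ (Fin n))) (hΩ : IsCompact Ω)
    (μseq : ℕ → SignedMeasure (EuclideanSpace ℝ (Fin n)))
    (μ : SignedMeasure (EuclideanSpace ℝ (Fin n)))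
    (hsuppk : ∀ k, (μseq k).totalVariation Ωᶜ = 0)
    (hsuppμ : μ.totalVariation Ωᶜ = 0)
    (hweak : ∀ φ : EuclideanSpace ℝ (Fin n) → ℝ, Continuous φ →
      Tendsto (fun k => sInt (μseq k) φ) atTop (nhds (sInt μ φ))) :
    Tendsto (fun k => Real.sqrt (qForm ρ (μseq k - μ))) atTop (nhds 0) :=
  weakstar_to_Dnorm_general n ρ hρc hρsupp Ω hΩ μseq μ hsuppk hsuppμ hweak
end

section
/- Let G be a finite index set, and for each z ∈ G let θ_z ∈ L²(ℝ^n) ∩ L¹(ℝ^n) be non-negative, with L₀ ≥ sup_{x ∈ ℝ^n} Σ_{z∈G} θ_z(x) ∫ θ_z(w) dw. Let ψ ∈ C_c(ℝ^n) be symmetric, and define A : M(ℝ^n) → ℝ^{#G} by [Aμ]_z = ∫ (θ_z * ψ)(x) dμ(x). Then for every Radon measure μ, ‖Aμ‖₂² ≤ L₀ ∫∫ (ψ*ψ)(x−y) dμ(x) dμ(y). -/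
open MeasureTheory

/-! Put `F w = ∫ ψ(x - w) dμ(x)`. By Fubini, `[Aμ]_z = ∫ θ_z F`, and, since `ψ` is symmetric,
`∫∫ (ψ * ψ)(x - y) dμ(x) dμ(y) = ∫ F²`. Cauchy–Schwarz with weight `θ_z` gives
`(∫ θ_z F)² ≤ (∫ θ_z) (∫ θ_z F²)`, and summing over `z` the weight `∑_z θ_z ∫ θ_z` is at most `L₀`. -/

open Function

section SignedIntegral

variable {α β : Type*} [MeasurableSpace α] [MeasurableSpace β] (μ : SignedMeasure α)

theorem sInt_const_mul (c : ℝ) (f : α → ℝ) : sInt μ (fun x => c * f x) = c * sInt μ f := by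
  simp only [sInt, integral_const_mul, mul_sub]

theorem norm_sInt_le_of_norm_le_const {f : α → ℝ} {C : ℝ} (hf : ∀ x, ‖f x‖ ≤ C) :
    ‖sInt μ f‖ ≤ C * μ.totalVariation.real Set.univ := by
  rw [SignedMeasure.totalVariation, measureReal_add_apply, mul_add]
  exact (norm_sub_le _ _).trans (add_le_add
    (norm_integral_le_of_norm_le_const (ae_of_all _ hf))
    (norm_integral_le_of_norm_le_const (ae_of_all _ hf)))

variable {μ} {m : Measure β} [SFinite m] {f : α → β → ℝ}

theorem integrable_sInt_of_prod
    (hf : ∀ (a : Measure α) [IsFiniteMeasure a], Integrable (uncurry f) (a.prod m)) :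
    Integrable (fun y => sInt μ (fun x => f x y)) m :=
  (hf _).integral_prod_right.sub (hf _).integral_prod_right

theorem sInt_integral_comm
    (hf : ∀ (a : Measure α) [IsFiniteMeasure a], Integrable (uncurry f) (a.prod m)) :
    sInt μ (fun x => ∫ y, f x y ∂m) = ∫ y, sInt μ (fun x => f x y) ∂m := by
  rw [sInt, integral_integral_swap (hf _), integral_integral_swap (hf _)]
  exact (integral_sub (hf _).integral_prod_right (hf _).integral_prod_right).symm

end SignedIntegral

theorem sq_integral_mul_le_integral_mul_integral_mul_sq {α : Type*} [MeasurableSpace α]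
    {m : Measure α} {θ F : α → ℝ} (hθ : ∀ x, 0 ≤ θ x) (hθi : Integrable θ m)
    (hθF : Integrable (fun w => θ w * F w) m) (hθF2 : Integrable (fun w => θ w * F w ^ 2) m) :
    (∫ w, θ w * F w ∂m) ^ 2 ≤ (∫ w, θ w ∂m) * ∫ w, θ w * F w ^ 2 ∂m := by
  have hquad : ∀ t : ℝ, 0 ≤ (∫ w, θ w ∂m) * (t * t) + (2 * ∫ w, θ w * F w ∂m) * t
      + ∫ w, θ w * F w ^ 2 ∂m := by
    intro t
    have hexpand : (fun w => θ w * (F w + t) ^ 2)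
        = fun w => (t * t * θ w + 2 * t * (θ w * F w)) + θ w * F w ^ 2 := by
      funext w; ring
    have h0 : 0 ≤ ∫ w, θ w * (F w + t) ^ 2 ∂m :=
      integral_nonneg fun w => mul_nonneg (hθ w) (sq_nonneg _)
    rw [hexpand, integral_add (f := fun w => t * t * θ w + 2 * t * (θ w * F w))
      ((hθi.const_mul _).add (hθF.const_mul _)) hθF2,
      integral_add (hθi.const_mul _) (hθF.const_mul _),
      integral_const_mul, integral_const_mul] at h0
    linarith
  have hdisc := discrim_le_zero hquad
  rw [discrim] at hdisc
  nlinarith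

section Convolution

variable {E : Type*} [NormedAddCommGroup E] [MeasurableSpace E] {m : Measure E}

/-- `sConv μ ψ` is the convolution of `μ` with the reflection of `ψ`. -/
noncomputable def sConv (μ : SignedMeasure E) (ψ : E → ℝ) (w : E) : ℝ :=
  sInt μ (fun x => ψ (x - w))

variable {μ : SignedMeasure E} {ψ : E → ℝ}

theorem norm_sConv_le {C : ℝ} (hψC : ∀ x, ‖ψ x‖ ≤ C) (w : E) :
    ‖sConv μ ψ w‖ ≤ C * μ.totalVariation.real Set.univ :=
  norm_sInt_le_of_norm_le_const μ fun x => hψC (x - w)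

variable [BorelSpace E]

theorem integral_comp_sub_mul_comp_sub [m.IsAddLeftInvariant] [m.IsNegInvariant]
    (hψsym : ∀ x, ψ (-x) = ψ x) (x y : E) :
    ∫ w, ψ (y - w) * ψ (x - w) ∂m = ∫ u, ψ u * ψ ((x - y) - u) ∂m := by
  have hshift := integral_sub_left_eq_self (fun u => ψ u * ψ ((x - y) + u)) m y
  have hreflect := integral_neg_eq_self (fun u => ψ u * ψ ((x - y) + u)) m
  simp only [sub_add_sub_cancel] at hshift
  simp only [hψsym, ← sub_eq_add_neg] at hreflect
  exact hshift.trans hreflect.symm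

variable [SecondCountableTopology E]

theorem integrable_comp_sub_prod [SFinite m] [m.IsAddLeftInvariant] [m.IsNegInvariant]
    {g : E → ℝ} (hgc : Continuous g) (hgi : Integrable g m) (a : Measure E) [IsFiniteMeasure a] :
    Integrable (fun p : E × E => g (p.1 - p.2)) (a.prod m) := by
  rw [integrable_prod_iff (f := fun p : E × E => g (p.1 - p.2))
    (hgc.comp (continuous_fst.sub continuous_snd)).aestronglyMeasurable]
  refine ⟨ae_of_all _ fun x => hgi.comp_sub_left x, ?_⟩
  have hshift : (fun x => ∫ w, ‖g (x - w)‖ ∂m) = fun _ => ∫ w, ‖g w‖ ∂m :=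
    funext fun x => integral_sub_left_eq_self (fun w => ‖g w‖) m x
  rw [hshift]
  exact integrable_const _

theorem integrable_mul_comp_sub_prod_of_bdd [SFinite m] [m.IsAddLeftInvariant]
    [m.IsNegInvariant] {k g : E → ℝ} {C : ℝ} (hk : AEStronglyMeasurable k m)
    (hkC : ∀ w, ‖k w‖ ≤ C) (hgc : Continuous g) (hgi : Integrable g m)
    (a : Measure E) [IsFiniteMeasure a] :
    Integrable (fun p : E × E => k p.2 * g (p.1 - p.2)) (a.prod m) :=
  (integrable_comp_sub_prod hgc hgi a).bdd_mul
    (hk.comp_quasiMeasurePreserving Measure.quasiMeasurePreserving_snd)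
    (ae_of_all _ fun p => hkC p.2)

theorem integrable_mul_comp_sub_prod_of_integrable [SFinite m] {k g : E → ℝ} {C : ℝ}
    (hk : Integrable k m) (hgc : Continuous g) (hgC : ∀ x, ‖g x‖ ≤ C)
    (a : Measure E) [IsFiniteMeasure a] :
    Integrable (fun p : E × E => k p.2 * g (p.1 - p.2)) (a.prod m) :=
  (hk.comp_snd a).mul_bdd (hgc.comp (continuous_fst.sub continuous_snd)).aestronglyMeasurable
    (ae_of_all _ fun _ => hgC _)

theorem integrable_sConv [SFinite m] [m.IsAddLeftInvariant] [m.IsNegInvariant]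
    (hψc : Continuous ψ) (hψi : Integrable ψ m) : Integrable (sConv μ ψ) m :=
  integrable_sInt_of_prod (f := fun x w => ψ (x - w)) (integrable_comp_sub_prod hψc hψi)

theorem sInt_integral_mul_comp_sub [SFinite m] {k : E → ℝ} {C : ℝ} (hk : Integrable k m)
    (hψc : Continuous ψ) (hψC : ∀ x, ‖ψ x‖ ≤ C) :
    sInt μ (fun x => ∫ w, k w * ψ (x - w) ∂m) = ∫ w, k w * sConv μ ψ w ∂m := by
  rw [sInt_integral_comm (f := fun x w => k w * ψ (x - w))
    (integrable_mul_comp_sub_prod_of_integrable hk hψc hψC)]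
  simp only [sInt_const_mul, sConv]

theorem sInt_sInt_integral_mul_comp_sub [SFinite m] [m.IsAddLeftInvariant] [m.IsNegInvariant]
    (hψc : Continuous ψ) (hψi : Integrable ψ m) {C : ℝ} (hψC : ∀ x, ‖ψ x‖ ≤ C)
    (hψsym : ∀ x, ψ (-x) = ψ x) :
    sInt μ (fun y => sInt μ (fun x => ∫ w, ψ w * ψ ((x - y) - w) ∂m))
      = ∫ w, sConv μ ψ w ^ 2 ∂m := by
  have hinner : ∀ y, sInt μ (fun x => ∫ w, ψ w * ψ ((x - y) - w) ∂m)
      = ∫ w, sConv μ ψ w * ψ (y - w) ∂m := by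
    intro y
    simp_rw [← integral_comp_sub_mul_comp_sub (m := m) hψsym]
    rw [sInt_integral_comm (f := fun x w => ψ (y - w) * ψ (x - w))
      (integrable_mul_comp_sub_prod_of_bdd
        (hψc.comp (continuous_const.sub continuous_id)).aestronglyMeasurable
        (fun w => hψC (y - w)) hψc hψi)]
    simp only [sInt_const_mul, sConv, mul_comm]
  simp_rw [hinner]
  rw [sInt_integral_comm (f := fun y w => sConv μ ψ w * ψ (y - w))
    (integrable_mul_comp_sub_prod_of_bdd (integrable_sConv hψc hψi).aestronglyMeasurable
      (norm_sConv_le hψC) hψc hψi)]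
  simp only [sInt_const_mul, sq]
  rfl

end Convolution

theorem sum_sq_integral_mul_le {α ι : Type*} [MeasurableSpace α] [Fintype ι] {m : Measure α}
    {θ : ι → α → ℝ} (hθ : ∀ z x, 0 ≤ θ z x) (hθi : ∀ z, Integrable (θ z) m) {L : ℝ}
    (hL : ∀ x, ∑ z, θ z x * ∫ w, θ z w ∂m ≤ L) {F : α → ℝ} (hF : Integrable F m) {C : ℝ}
    (hFC : ∀ x, ‖F x‖ ≤ C) :
    ∑ z, (∫ w, θ z w * F w ∂m) ^ 2 ≤ L * ∫ w, F w ^ 2 ∂m := by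
  have hF2C : ∀ x, ‖F x ^ 2‖ ≤ C ^ 2 := fun x => by
    rw [norm_pow]; exact pow_le_pow_left₀ (norm_nonneg _) (hFC x) 2
  have hF2m : AEStronglyMeasurable (fun w => F w ^ 2) m := hF.aestronglyMeasurable.pow 2
  have hθF z : Integrable (fun w => θ z w * F w) m :=
    (hθi z).mul_bdd hF.aestronglyMeasurable (ae_of_all _ hFC)
  have hθF2 z : Integrable (fun w => θ z w * F w ^ 2) m :=
    (hθi z).mul_bdd hF2m (ae_of_all _ hF2C)
  have hF2 : Integrable (fun w => F w ^ 2) m := by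
    simpa only [sq] using hF.mul_bdd hF.aestronglyMeasurable (ae_of_all _ hFC)
  have hweight : Integrable (fun w => (∑ z, θ z w * ∫ w', θ z w' ∂m) * F w ^ 2) m :=
    (integrable_finsetSum _ fun z _ => (hθi z).mul_const _).mul_bdd hF2m (ae_of_all _ hF2C)
  calc ∑ z, (∫ w, θ z w * F w ∂m) ^ 2
      ≤ ∑ z, (∫ w, θ z w ∂m) * ∫ w, θ z w * F w ^ 2 ∂m :=
        Finset.sum_le_sum fun z _ =>
          sq_integral_mul_le_integral_mul_integral_mul_sq (hθ z) (hθi z) (hθF z) (hθF2 z)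
    _ = ∫ w, ∑ z, (∫ w', θ z w' ∂m) * (θ z w * F w ^ 2) ∂m := by
        rw [integral_finsetSum _ fun z _ => (hθF2 z).const_mul _]
        simp_rw [integral_const_mul]
    _ = ∫ w, (∑ z, θ z w * ∫ w', θ z w' ∂m) * F w ^ 2 ∂m := by
        congr with w
        rw [Finset.sum_mul]
        exact Finset.sum_congr rfl fun z _ => by ring
    _ ≤ ∫ w, L * F w ^ 2 ∂m :=
        integral_mono hweight (hF2.const_mul L)
          fun w => mul_le_mul_of_nonneg_right (hL w) (sq_nonneg _)
    _ = L * ∫ w, F w ^ 2 ∂m := integral_const_mul _ _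

theorem sensor_grid_bound_general
    (n : ℕ) (G : Type*) [Fintype G]
    (θ : G → EuclideanSpace ℝ (Fin n) → ℝ)
    (hθpos : ∀ z x, 0 ≤ θ z x)
    (hθL1 : ∀ z, Integrable (θ z))
    (L₀ : ℝ)
    (hL₀ : ∀ x, ∑ z : G, θ z x * (∫ w, θ z w) ≤ L₀)
    (ψ : EuclideanSpace ℝ (Fin n) → ℝ)
    (hψc : Continuous ψ) (hψsupp : HasCompactSupport ψ)
    (hψsym : ∀ x, ψ (-x) = ψ x)
    (μ : SignedMeasure (EuclideanSpace ℝ (Fin n))) :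
    ∑ z : G, (sInt μ (fun x => ∫ w, θ z w * ψ (x - w))) ^ 2
      ≤ L₀ * sInt μ (fun y => sInt μ (fun x => ∫ w, ψ w * ψ ((x - y) - w))) := by
  obtain ⟨C, hψC⟩ := hψsupp.exists_bound_of_continuous hψc
  have hψi : Integrable ψ := hψc.integrable_of_hasCompactSupport hψsupp
  simp_rw [sInt_integral_mul_comp_sub (hθL1 _) hψc hψC,
    sInt_sInt_integral_mul_comp_sub hψc hψi hψC hψsym]
  exact sum_sq_integral_mul_le hθpos hθL1 hL₀ (integrable_sConv hψc hψi) (norm_sConv_le hψC)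

/-- for a finite sensor grid with `L₀ ≥ sup_x Σ_z θ_z(x) ∫θ_z`, a
symmetric spread `ψ ∈ C_c(ℝⁿ)` and `[Aμ]_z = ∫ (θ_z * ψ) dμ`, we have
`‖Aμ‖₂² ≤ L₀ ∫∫ (ψ*ψ)(x−y) dμ(x) dμ(y)`. -/
theorem sensor_grid_bound
    (n : ℕ) (G : Type*) [Fintype G]
    (θ : G → EuclideanSpace ℝ (Fin n) → ℝ)
    (hθpos : ∀ z x, 0 ≤ θ z x)
    (hθL1 : ∀ z, Integrable (θ z))
    (hθL2 : ∀ z, MemLp (θ z) 2 (volume : Measure (EuclideanSpace ℝ (Fin n))))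
    (L₀ : ℝ)
    (hL₀ : ∀ x, ∑ z : G, θ z x * (∫ w, θ z w) ≤ L₀)
    (ψ : EuclideanSpace ℝ (Fin n) → ℝ)
    (hψc : Continuous ψ) (hψsupp : HasCompactSupport ψ)
    (hψsym : ∀ x, ψ (-x) = ψ x)
    (μ : SignedMeasure (EuclideanSpace ℝ (Fin n))) :
    ∑ z : G, (sInt μ (fun x => ∫ w, θ z w * ψ (x - w))) ^ 2
      ≤ L₀ * sInt μ (fun y => sInt μ (fun x => ∫ w, ψ w * ψ ((x - y) - w))) :=
  sensor_grid_bound_general n G θ hθpos hθL1 L₀ hL₀ ψ hψc hψsupp hψsym μ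
end

section
/- (Deterministic Robbins–Siegmund) Let {a_k}, {b_k}, {c_k}, {d_k} be non-negative real sequences satisfying a_{k+1} ≤ a_k(1 + b_k) + c_k − d_k for all k ∈ ℕ. If Σ b_k < ∞ and Σ c_k < ∞, then lim_{k→∞} a_k exists and is finite, and Σ_{k=0}^∞ d_k < ∞. -/
/-!
Dividing by the partial products `P k = ∏_{j<k} (1 + b_j)`, which increase to a finite limit
because `Σ b_k < ∞`, turns the recursion into `A_{k+1} ≤ A_k + e_k - f_k` for `A = a / P` and
summable `e`. Then `A_k - Σ_{j<k} e_j + Σ_{j<k} f_j` is antitone and bounded below, which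
bounds the partial sums of `f` and makes `A` converge; multiplying back by `P` gives the claim.
-/

open Filter Finset

section Telescoping

variable {A e f : ℕ → ℝ}

lemma antitone_sub_sum_add_sum_of_succ_le (h : ∀ k, A (k + 1) ≤ A k + e k - f k) :
    Antitone fun k => A k - ∑ j ∈ range k, e j + ∑ j ∈ range k, f j :=
  antitone_nat_of_succ_le fun k => by
    simp only [sum_range_succ]
    linarith [h k]

lemma sum_range_le_of_succ_le (hA : ∀ k, 0 ≤ A k) (he : ∀ k, 0 ≤ e k)
    (h : ∀ k, A (k + 1) ≤ A k + e k - f k) (hes : Summable e) (k : ℕ) :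
    ∑ j ∈ range k, f j ≤ A 0 + ∑' j, e j := by
  have h_anti := antitone_sub_sum_add_sum_of_succ_le h (Nat.zero_le k)
  have h_sum := hes.sum_le_tsum (range k) fun j _ => he j
  simp only [range_zero, sum_empty] at h_anti
  linarith [hA k]

lemma summable_of_succ_le (hA : ∀ k, 0 ≤ A k) (he : ∀ k, 0 ≤ e k) (hf : ∀ k, 0 ≤ f k)
    (h : ∀ k, A (k + 1) ≤ A k + e k - f k) (hes : Summable e) : Summable f :=
  summable_of_sum_range_le hf (sum_range_le_of_succ_le hA he h hes)

lemma exists_tendsto_of_succ_le (hA : ∀ k, 0 ≤ A k) (he : ∀ k, 0 ≤ e k) (hf : ∀ k, 0 ≤ f k)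
    (h : ∀ k, A (k + 1) ≤ A k + e k - f k) (hes : Summable e) :
    ∃ L, Tendsto A atTop (nhds L) := by
  set S := fun k => A k - ∑ j ∈ range k, e j + ∑ j ∈ range k, f j
  have hS_bdd : BddBelow (Set.range S) := by
    refine ⟨-∑' j, e j, Set.forall_mem_range.2 fun k => ?_⟩
    have := hes.sum_le_tsum (range k) fun j _ => he j
    have := sum_nonneg fun j (_ : j ∈ range k) => hf j
    linarith [hA k]
  have hfs := summable_of_succ_le hA he hf h hes
  have hS := tendsto_atTop_ciInf (antitone_sub_sum_add_sum_of_succ_le h) hS_bdd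
  refine ⟨_, ((hS.add hes.hasSum.tendsto_sum_nat).sub hfs.hasSum.tendsto_sum_nat).congr
    fun k => ?_⟩
  ring

end Telescoping

section Normalization

variable {b : ℕ → ℝ}

lemma one_le_prod_range_one_add (hb : ∀ k, 0 ≤ b k) (k : ℕ) :
    1 ≤ ∏ j ∈ range k, (1 + b j) :=
  one_le_prod fun j _ => le_add_of_nonneg_right (hb j)

lemma prod_range_one_add_le_exp_tsum (hb : ∀ k, 0 ≤ b k) (hbs : Summable b) (k : ℕ) :
    ∏ j ∈ range k, (1 + b j) ≤ Real.exp (∑' j, b j) :=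
  (Real.prod_one_add_le_exp_sum _ hb).trans <|
    Real.exp_le_exp.2 <| hbs.sum_le_tsum _ fun j _ => hb j

lemma succ_div_prod_le {a c d : ℕ → ℝ} (hb : ∀ k, 0 ≤ b k)
    (hrec : ∀ k, a (k + 1) ≤ a k * (1 + b k) + c k - d k) (k : ℕ) :
    a (k + 1) / ∏ j ∈ range (k + 1), (1 + b j) ≤
      a k / ∏ j ∈ range k, (1 + b j) + c k / ∏ j ∈ range (k + 1), (1 + b j) -
        d k / ∏ j ∈ range (k + 1), (1 + b j) := by
  have hP := zero_lt_one.trans_le (one_le_prod_range_one_add hb k)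
  have hbk : 0 < 1 + b k := by linarith [hb k]
  rw [prod_range_succ]
  calc a (k + 1) / ((∏ j ∈ range k, (1 + b j)) * (1 + b k))
      ≤ (a k * (1 + b k) + c k - d k) / ((∏ j ∈ range k, (1 + b j)) * (1 + b k)) := by
        gcongr
        exact hrec k
    _ = _ := by field_simp

end Normalization

/-- deterministic Robbins–Siegmund: if non-negative sequences satisfy
`a_{k+1} ≤ a_k(1+b_k) + c_k − d_k` with `Σb_k < ∞` and `Σc_k < ∞`, then `a_k`
converges to a finite limit and `Σ d_k < ∞`. -/
theorem robbins_siegmund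
    (a b c d : ℕ → ℝ)
    (ha : ∀ k, 0 ≤ a k) (hb : ∀ k, 0 ≤ b k) (hc : ∀ k, 0 ≤ c k) (hd : ∀ k, 0 ≤ d k)
    (hrec : ∀ k, a (k + 1) ≤ a k * (1 + b k) + c k - d k)
    (hbsum : Summable b) (hcsum : Summable c) :
    (∃ L : ℝ, Tendsto a atTop (nhds L)) ∧ Summable d := by
  set P := fun k => ∏ j ∈ range k, (1 + b j)
  have hP_one_le : ∀ k, 1 ≤ P k := one_le_prod_range_one_add hb
  have hP_pos : ∀ k, 0 < P k := fun k => zero_lt_one.trans_le (hP_one_le k)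
  have hA : ∀ k, 0 ≤ a k / P k := fun k => div_nonneg (ha k) (hP_pos k).le
  have he : ∀ k, 0 ≤ c k / P (k + 1) := fun k => div_nonneg (hc k) (hP_pos _).le
  have hf : ∀ k, 0 ≤ d k / P (k + 1) := fun k => div_nonneg (hd k) (hP_pos _).le
  have hes : Summable fun k => c k / P (k + 1) :=
    hcsum.of_nonneg_of_le he fun k => div_le_self (hc k) (hP_one_le _)
  have hstep := succ_div_prod_le hb hrec
  have hfs := summable_of_succ_le hA he hf hstep hes
  obtain ⟨L, hL⟩ := exists_tendsto_of_succ_le hA he hf hstep hes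
  refine ⟨⟨L * ∏' j, (1 + b j), ?_⟩, ?_⟩
  · exact (hL.mul (Real.multipliable_one_add_of_summable hbsum).tendsto_prod_tprod_nat).congr
      fun k => div_mul_cancel₀ _ (hP_pos k).ne'
  · refine hfs.mul_right (Real.exp (∑' j, b j)) |>.of_nonneg_of_le hd fun k => ?_
    calc d k = d k / P (k + 1) * P (k + 1) := (div_mul_cancel₀ _ (hP_pos _).ne').symm
      _ ≤ _ := mul_le_mul_of_nonneg_left (prod_range_one_add_le_exp_tsum hb hbsum _) (hf k)
end

section
/- Let λ₀ = 1 and λ_{k+1} = 2λ_k/(λ_k + √(4 + λ_k²)) for k ∈ ℕ. Then for all N ∈ ℕ: (i) λ_N ∈ (0,1]; (ii) 1/λ_{k+1} = (1 + √(1 + 4/λ_k²))/2 ≤ 1 + 1/λ_k, hence 1/λ_N ≤ N + 1; (iii) 1/λ_N ≥ 1 + N/2, so λ_N ≤ 2/(N+2) = O(1/N); and (iv) λ_k^{−2}(1 − λ_k) = λ_{k−1}^{−2} for all k ≥ 1 (with the convention that (1−λ₀)/λ₀² = 0). -/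
/-!
With `t_k = 1 / λ_k` the recursion reads `t_{k+1} = (1 + √(1 + 4 t_k²)) / 2`, the positive root of
`t² - t = t_k²`; this quadratic relation is (iv). Since `2 t_k ≤ √(1 + 4 t_k²) ≤ 1 + 2 t_k`, each
step increases `t_k` by at least `1/2` and at most `1`, which gives (ii) and (iii) from `t_0 = 1`.
-/

namespace FistaParameter

open Real

theorem add_sqrt_four_add_sq_pos (x : ℝ) : 0 < x + √(4 + x ^ 2) := by
  have hlt : |x| < √(4 + x ^ 2) := by
    rw [lt_sqrt (abs_nonneg x), sq_abs]
    linarith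
  linarith [neg_abs_le x]

theorem step_pos {x : ℝ} (hx : 0 < x) : 0 < 2 * x / (x + √(4 + x ^ 2)) :=
  div_pos (by positivity) (add_sqrt_four_add_sq_pos x)

theorem step_le_one (x : ℝ) : 2 * x / (x + √(4 + x ^ 2)) ≤ 1 := by
  have hle : x ≤ √(4 + x ^ 2) := (le_abs_self x).trans (abs_le_sqrt (by linarith))
  rw [div_le_one (add_sqrt_four_add_sq_pos x)]
  linarith

theorem one_div_step {x : ℝ} (hx : 0 < x) :
    1 / (2 * x / (x + √(4 + x ^ 2))) = (1 + √(1 + 4 / x ^ 2)) / 2 := by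
  have hsqrt : √(1 + 4 / x ^ 2) = √(4 + x ^ 2) / x := by
    rw [show 1 + 4 / x ^ 2 = (4 + x ^ 2) / x ^ 2 by field_simp; ring,
      sqrt_div (by positivity), sqrt_sq hx.le]
  rw [one_div_div, hsqrt]
  field_simp

theorem half_one_add_sqrt_sq_sub_self (x : ℝ) :
    ((1 + √(1 + 4 / x ^ 2)) / 2) ^ 2 - (1 + √(1 + 4 / x ^ 2)) / 2 = 1 / x ^ 2 := by
  have hsq : √(1 + 4 / x ^ 2) ^ 2 = 1 + 4 / x ^ 2 := sq_sqrt (by positivity)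
  linear_combination hsq / 4

theorem one_div_add_half_le_half_one_add_sqrt (x : ℝ) :
    1 / x + 1 / 2 ≤ (1 + √(1 + 4 / x ^ 2)) / 2 := by
  have hle : 2 / x ≤ √(1 + 4 / x ^ 2) :=
    (le_abs_self _).trans (abs_le_sqrt (by rw [div_pow]; linarith))
  linarith [show 2 / x = 2 * (1 / x) by ring]

theorem half_one_add_sqrt_le_one_add_one_div {x : ℝ} (hx : 0 < x) :
    (1 + √(1 + 4 / x ^ 2)) / 2 ≤ 1 + 1 / x := by
  have hle : √(1 + 4 / x ^ 2) ≤ 1 + 2 / x := by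
    rw [sqrt_le_left (by positivity)]
    have hexpand : (1 + 2 / x) ^ 2 = 1 + 4 / x + 4 / x ^ 2 := by field_simp; ring
    linarith [show 0 ≤ 4 / x by positivity]
  linarith [show 2 / x = 2 * (1 / x) by ring]

theorem one_sub_div_sq (x : ℝ) : (1 - x) / x ^ 2 = (1 / x) ^ 2 - 1 / x := by
  rcases eq_or_ne x 0 with rfl | hx
  · simp
  · field_simp

end FistaParameter

/-- properties of the FISTA inertial parameter recursion
`λ₀ = 1`, `λ_{k+1} = 2λ_k/(λ_k + √(4 + λ_k²))`. -/
theorem fista_parameter_recursion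
    (lam : ℕ → ℝ) (h0 : lam 0 = 1)
    (hrec : ∀ k, lam (k + 1) = 2 * lam k / (lam k + Real.sqrt (4 + lam k ^ 2))) :
    -- (i) λ_N ∈ (0, 1]
    (∀ N, 0 < lam N ∧ lam N ≤ 1) ∧
    -- (ii) 1/λ_{k+1} = (1 + √(1 + 4/λ_k²))/2 ≤ 1 + 1/λ_k, hence 1/λ_N ≤ N + 1
    (∀ k, 1 / lam (k + 1) = (1 + Real.sqrt (1 + 4 / lam k ^ 2)) / 2) ∧
    (∀ k, 1 / lam (k + 1) ≤ 1 + 1 / lam k) ∧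
    (∀ N : ℕ, 1 / lam N ≤ N + 1) ∧
    -- (iii) 1/λ_N ≥ 1 + N/2, so λ_N ≤ 2/(N+2)
    (∀ N : ℕ, 1 + (N : ℝ) / 2 ≤ 1 / lam N) ∧
    (∀ N : ℕ, lam N ≤ 2 / ((N : ℝ) + 2)) ∧
    -- (iv) λ_k^{-2}(1 − λ_k) = λ_{k-1}^{-2} for k ≥ 1 (and (1−λ₀)/λ₀² = 0)
    ((1 - lam 0) / lam 0 ^ 2 = 0) ∧
    (∀ k, (1 - lam (k + 1)) / lam (k + 1) ^ 2 = 1 / lam k ^ 2) := by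
  have hpos : ∀ N, 0 < lam N := by
    intro N
    induction N with
    | zero => simp [h0]
    | succ k ih => rw [hrec k]; exact FistaParameter.step_pos ih
  have hle : ∀ N, lam N ≤ 1 := by
    rintro (_ | k)
    · exact h0.le
    · rw [hrec k]; exact FistaParameter.step_le_one _
  have hinv : ∀ k, 1 / lam (k + 1) = (1 + Real.sqrt (1 + 4 / lam k ^ 2)) / 2 := fun k => by
    rw [hrec k, FistaParameter.one_div_step (hpos k)]
  have hup : ∀ k, 1 / lam (k + 1) ≤ 1 + 1 / lam k := fun k => by
    rw [hinv k]; exact FistaParameter.half_one_add_sqrt_le_one_add_one_div (hpos k)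
  have hupper : ∀ N : ℕ, 1 / lam N ≤ N + 1 := by
    intro N
    induction N with
    | zero => simp [h0]
    | succ k ih => push_cast; linarith [hup k]
  have hlower : ∀ N : ℕ, 1 + (N : ℝ) / 2 ≤ 1 / lam N := by
    intro N
    induction N with
    | zero => simp [h0]
    | succ k ih =>
      push_cast
      linarith [hinv k ▸ FistaParameter.one_div_add_half_le_half_one_add_sqrt (lam k)]
  have hbound : ∀ N : ℕ, lam N ≤ 2 / ((N : ℝ) + 2) := fun N => calc
    lam N = 1 / (1 / lam N) := (one_div_one_div _).symm
    _ ≤ 1 / (1 + (N : ℝ) / 2) := one_div_le_one_div_of_le (by positivity) (hlower N)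
    _ = 2 / ((N : ℝ) + 2) := by field_simp; ring
  refine ⟨fun N => ⟨hpos N, hle N⟩, hinv, hup, hupper, hlower, hbound, by simp [h0], fun k => ?_⟩
  rw [FistaParameter.one_sub_div_sq, hinv k, FistaParameter.half_one_add_sqrt_sq_sub_self]
end

section
/- (Generalised Opial lemma for Bregman divergences) Let X = (X_*)^* be the dual of a separable normed space X_*, M : X → ℝ convex and Gateaux differentiable with M' : X → X_* weak-*-to-weak continuous, X̂ ⊂ X non-empty, and {e_{k+1}} ⊂ X_*. Suppose: (i) all weak-* limit points of a sequence {x^k} ⊂ X belong to X̂; (ii) Σ_k max{0, ⟨e_{k+1}, x^{k+1} − x̄⟩} < ∞ for all x̄ ∈ X̂; (iii) B_M(x^{k+1}, x*) ≤ B_M(x^k, x*) + ⟨e_{k+1}, x^{k+1} − x*⟩ for all x* ∈ X̂ and k, where B_M(x,z) := M(z) − M(x) − ⟨M'(x), z−x⟩. Then any two weak-* limit points x̂, x̄ of {x^k} lie in X̂ and satisfy ⟨M'(x̂) − M'(x̄), x̂ − x̄⟩ = 0. If {x^k} is bounded, a weak-* limit point exists, and if the conclusion ⟨M'(x̂)−M'(x̄),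 x̂−x̄⟩ = 0 forces x̂ = x̄, then the whole sequence x^k converges weakly-* to a point of X̂. -/
/-!
Along the sequence, the Bregman divergence `B_M(xᵏ, x*)` to any `x* ∈ X̂` is non-negative
(convexity) and quasi-Féjér monotone with summable errors, hence converges. For two points
`x̂, x̄ ∈ X̂` the difference of their divergences is `M x̂ - M x̄ - ⟨M'(xᵏ), x̂ - x̄⟩`, so
`⟨M'(xᵏ), x̂ - x̄⟩` converges. If `x̂, x̄` are weak-* cluster points, weak-*-to-weak continuity
of `M'` identifies this limit with both `⟨M'(x̂), x̂ - x̄⟩` and `⟨M'(x̄), x̂ - x̄⟩`. Boundedness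
puts the sequence in a weak-* compact ball (Banach–Alaoglu), where a sequence with a unique
cluster point converges.
-/

open Filter Topology

theorem exists_tendsto_of_le_add_of_summable {a b : ℕ → ℝ} (ha : ∀ k, 0 ≤ a k)
    (hb : Summable b) (hrec : ∀ k, a (k + 1) ≤ a k + b k) : ∃ L, Tendsto a atTop (𝓝 L) := by
  set B : ℕ → ℝ := fun k => ∑ j ∈ Finset.range k, b j
  have hB : Tendsto B atTop (𝓝 (∑' j, b j)) := hb.hasSum.tendsto_sum_nat
  have hanti : Antitone fun k => a k - B k := by
    refine antitone_nat_of_succ_le fun k => ?_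
    have := hrec k
    simp only [B, Finset.sum_range_succ]
    linarith
  obtain ⟨C, hC⟩ := hB.bddAbove_range
  have hbdd : BddBelow (Set.range fun k => a k - B k) := by
    refine ⟨-C, ?_⟩
    rintro _ ⟨k, rfl⟩
    linarith [ha k, hC ⟨k, rfl⟩]
  exact ⟨_, by simpa using (tendsto_atTop_ciInf hanti hbdd).add hB⟩

theorem ConvexOn.le_sub_of_tendsto_slope {E : Type*} [AddCommGroup E] [Module ℝ E]
    {f : E → ℝ} (hf : ConvexOn ℝ Set.univ f) {x z : E} {d : ℝ}
    (hd : Tendsto (fun t : ℝ => (f (x + t • (z - x)) - f x) / t) (𝓝[>] 0) (𝓝 d)) :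
    d ≤ f z - f x := by
  refine le_of_tendsto hd ?_
  filter_upwards [Ioc_mem_nhdsGT (zero_lt_one' ℝ)] with t ⟨ht0, ht1⟩
  have hconv := hf.2 (Set.mem_univ x) (Set.mem_univ z) (sub_nonneg.2 ht1) ht0.le (by ring)
  have hline : (1 - t) • x + t • z = x + t • (z - x) := by module
  rw [hline, smul_eq_mul, smul_eq_mul] at hconv
  rw [div_le_iff₀ ht0]
  linarith

theorem MapClusterPt.apply_eq_of_tendsto_comp {α X Y : Type*} [TopologicalSpace X]
    [TopologicalSpace Y] [T2Space Y] {F : Filter α} {u : α → X} {x : X} {f : X → Y} {y : Y}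
    (hx : MapClusterPt x F u) (hf : ContinuousAt f x) (hy : Tendsto (f ∘ u) F (𝓝 y)) :
    f x = y :=
  eq_of_nhds_neBot ((hx.continuousAt_comp hf).clusterPt.mono hy)

theorem WeakDual.exists_isCompact_forall_mem {Xs ι : Type*} [NormedAddCommGroup Xs]
    [NormedSpace ℝ Xs] {u : ι → WeakDual ℝ Xs} (h : ∃ C : ℝ, ∀ k f, |u k f| ≤ C * ‖f‖) :
    ∃ K : Set (WeakDual ℝ Xs), IsCompact K ∧ ∀ k, u k ∈ K := by
  obtain ⟨C, hC⟩ := h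
  refine ⟨_, WeakDual.isCompact_closedBall 0 (max C 0), fun k => ?_⟩
  rw [Set.mem_preimage, mem_closedBall_zero_iff]
  refine ContinuousLinearMap.opNorm_le_bound _ (le_max_right C 0) fun f => ?_
  calc ‖toStrongDual (u k) f‖ = |u k f| := rfl
    _ ≤ C * ‖f‖ := hC k f
    _ ≤ max C 0 * ‖f‖ := by gcongr; exact le_max_left C 0

section Bregman

variable {Xs : Type*} [NormedAddCommGroup Xs] [NormedSpace ℝ Xs]
  {M : WeakDual ℝ Xs → ℝ} {M' : WeakDual ℝ Xs → Xs}

variable (M M') in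
noncomputable def bregmanDiv (x z : WeakDual ℝ Xs) : ℝ :=
  M z - M x - (z - x) (M' x)

theorem bregmanDiv_sub_bregmanDiv (x a b : WeakDual ℝ Xs) :
    bregmanDiv M M' x a - bregmanDiv M M' x b = M a - M b - (a - b) (M' x) := by
  have hsub (y w : WeakDual ℝ Xs) : (y - w) (M' x) = y (M' x) - w (M' x) := rfl
  simp only [bregmanDiv, hsub]
  ring

theorem bregmanDiv_nonneg (hconv : ConvexOn ℝ Set.univ M)
    (hgat : ∀ x h : WeakDual ℝ Xs,
      Tendsto (fun t : ℝ => (M (x + t • h) - M x) / t) (𝓝[≠] 0) (𝓝 (h (M' x))))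
    (x z : WeakDual ℝ Xs) : 0 ≤ bregmanDiv M M' x z :=
  sub_nonneg.2 <| hconv.le_sub_of_tendsto_slope <|
    (hgat x (z - x)).mono_left (nhdsWithin_mono 0 fun _ ht => ne_of_gt ht)

theorem exists_tendsto_bregmanDiv (hconv : ConvexOn ℝ Set.univ M)
    (hgat : ∀ x h : WeakDual ℝ Xs,
      Tendsto (fun t : ℝ => (M (x + t • h) - M x) / t) (𝓝[≠] 0) (𝓝 (h (M' x))))
    {e : ℕ → Xs} {xs : ℕ → WeakDual ℝ Xs} {z : WeakDual ℝ Xs}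
    (hsum : Summable fun k => max 0 ((xs (k + 1) - z) (e k)))
    (hmono : ∀ k, bregmanDiv M M' (xs (k + 1)) z
      ≤ bregmanDiv M M' (xs k) z + (xs (k + 1) - z) (e k)) :
    ∃ L, Tendsto (fun k => bregmanDiv M M' (xs k) z) atTop (𝓝 L) :=
  exists_tendsto_of_le_add_of_summable (fun k => bregmanDiv_nonneg hconv hgat _ _) hsum
    fun k => (hmono k).trans (by gcongr; exact le_max_right _ _)

theorem pairing_eq_zero_of_mapClusterPt {xs : ℕ → WeakDual ℝ Xs} {xhat xbar : WeakDual ℝ Xs}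
    (hcont : Continuous fun x => (xhat - xbar) (M' x))
    (hhat : MapClusterPt xhat atTop xs) (hbar : MapClusterPt xbar atTop xs)
    {Lhat Lbar : ℝ} (hLhat : Tendsto (fun k => bregmanDiv M M' (xs k) xhat) atTop (𝓝 Lhat))
    (hLbar : Tendsto (fun k => bregmanDiv M M' (xs k) xbar) atTop (𝓝 Lbar)) :
    (xhat - xbar) (M' xhat - M' xbar) = 0 := by
  have hlim : Tendsto (fun k => (xhat - xbar) (M' (xs k))) atTop
      (𝓝 (M xhat - M xbar - (Lhat - Lbar))) := by
    simpa only [bregmanDiv_sub_bregmanDiv, sub_sub_cancel] using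
      (tendsto_const_nhds (x := M xhat - M xbar)).sub (hLhat.sub hLbar)
  rw [map_sub, hhat.apply_eq_of_tendsto_comp hcont.continuousAt hlim,
    hbar.apply_eq_of_tendsto_comp hcont.continuousAt hlim, sub_self]

end Bregman

theorem opial_bregman_general
    (Xs : Type*) [NormedAddCommGroup Xs] [NormedSpace ℝ Xs]
    (M : WeakDual ℝ Xs → ℝ) (M' : WeakDual ℝ Xs → Xs)
    (hconv : ConvexOn ℝ Set.univ M)
    (hgat : ∀ (x h : WeakDual ℝ Xs),
      Tendsto (fun t : ℝ => (M (x + t • h) - M x) / t) (nhdsWithin 0 {0}ᶜ)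
        (nhds (h (M' x))))
    (hwcont : ∀ g : StrongDual ℝ Xs, Continuous fun x => g (M' x))
    (Xhat : Set (WeakDual ℝ Xs))
    (e : ℕ → Xs) (xs : ℕ → WeakDual ℝ Xs)
    -- (i) all weak-* limit points of the sequence belong to X̂
    (hlimit : ∀ x : WeakDual ℝ Xs, MapClusterPt x atTop xs → x ∈ Xhat)
    -- (ii) summability of the positive parts of the error pairings
    (hsum : ∀ xbar ∈ Xhat,
      Summable (fun k => max 0 ((xs (k + 1) - xbar) (e k))))
    -- (iii) quasi-Féjér monotonicity of the Bregman divergences with error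
    (hmono : ∀ xstar ∈ Xhat, ∀ k : ℕ,
      M xstar - M (xs (k + 1)) - (xstar - xs (k + 1)) (M' (xs (k + 1)))
        ≤ M xstar - M (xs k) - (xstar - xs k) (M' (xs k))
          + (xs (k + 1) - xstar) (e k)) :
    -- any two weak-* limit points lie in X̂ and pair to zero
    (∀ xhat xbar : WeakDual ℝ Xs,
      MapClusterPt xhat atTop xs → MapClusterPt xbar atTop xs →
      xhat ∈ Xhat ∧ xbar ∈ Xhat ∧ (xhat - xbar) (M' xhat - M' xbar) = 0) ∧
    -- if the sequence is bounded, a weak-* limit point exists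
    ((∃ C : ℝ, ∀ (k : ℕ) (f : Xs), |xs k f| ≤ C * ‖f‖) →
      ∃ xhat : WeakDual ℝ Xs, MapClusterPt xhat atTop xs) ∧
    -- with uniqueness from the pairing condition, the whole sequence converges weakly-*
    ((∃ C : ℝ, ∀ (k : ℕ) (f : Xs), |xs k f| ≤ C * ‖f‖) →
      (∀ xhat xbar : WeakDual ℝ Xs,
        (xhat - xbar) (M' xhat - M' xbar) = 0 → xhat = xbar) →
      ∃ xhat ∈ Xhat, Tendsto xs atTop (nhds xhat)) := by
  have hbregman (z : WeakDual ℝ Xs) (hz : z ∈ Xhat) :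
      ∃ L, Tendsto (fun k => bregmanDiv M M' (xs k) z) atTop (𝓝 L) :=
    exists_tendsto_bregmanDiv hconv hgat (hsum z hz) (hmono z hz)
  have hpair (xhat xbar : WeakDual ℝ Xs) (hhat : MapClusterPt xhat atTop xs)
      (hbar : MapClusterPt xbar atTop xs) :
      xhat ∈ Xhat ∧ xbar ∈ Xhat ∧ (xhat - xbar) (M' xhat - M' xbar) = 0 := by
    obtain ⟨Lhat, hLhat⟩ := hbregman xhat (hlimit xhat hhat)
    obtain ⟨Lbar, hLbar⟩ := hbregman xbar (hlimit xbar hbar)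
    exact ⟨hlimit xhat hhat, hlimit xbar hbar,
      pairing_eq_zero_of_mapClusterPt (hwcont _) hhat hbar hLhat hLbar⟩
  have hcluster (hbdd : ∃ C : ℝ, ∀ (k : ℕ) (f : Xs), |xs k f| ≤ C * ‖f‖) :
      ∃ xhat, MapClusterPt xhat atTop xs := by
    obtain ⟨K, hK, hmem⟩ := WeakDual.exists_isCompact_forall_mem hbdd
    obtain ⟨x, -, hx⟩ := hK.exists_mapClusterPt (f := atTop) (u := xs)
      (le_principal_iff.2 (mem_map.2 (Eventually.of_forall hmem)))
    exact ⟨x, hx⟩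
  refine ⟨hpair, hcluster, fun hbdd huniq => ?_⟩
  obtain ⟨K, hK, hmem⟩ := WeakDual.exists_isCompact_forall_mem hbdd
  obtain ⟨xhat, hxhat⟩ := hcluster hbdd
  exact ⟨xhat, hlimit xhat hxhat, hK.tendsto_nhds_of_unique_mapClusterPt
    (Eventually.of_forall hmem) fun y _ hy => huniq y xhat (hpair y xhat hy hxhat).2.2⟩

/-- generalised Opial lemma for Bregman divergences: on the dual `X` of a
separable normed space `X_*` (with the weak-* topology), for convex Gateaux-differentiable
`M` with weak-*-to-weak continuous derivative `M'`, a sequence satisfying the quasi-Féjér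
conditions has all its weak-* limit points in `X̂` with `⟨M'(x̂)−M'(x̄), x̂−x̄⟩ = 0` for any
two of them; if the sequence is bounded a limit point exists, and if the pairing condition
forces equality then the whole sequence converges weakly-*. -/
theorem opial_bregman
    (Xs : Type*) [NormedAddCommGroup Xs] [NormedSpace ℝ Xs]
    [TopologicalSpace.SeparableSpace Xs]
    (M : WeakDual ℝ Xs → ℝ) (M' : WeakDual ℝ Xs → Xs)
    (hconv : ConvexOn ℝ Set.univ M)
    (hgat : ∀ (x h : WeakDual ℝ Xs),
      Tendsto (fun t : ℝ => (M (x + t • h) - M x) / t) (nhdsWithin 0 {0}ᶜ)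
        (nhds (h (M' x))))
    (hwcont : ∀ g : StrongDual ℝ Xs, Continuous fun x => g (M' x))
    (Xhat : Set (WeakDual ℝ Xs)) (hne : Xhat.Nonempty)
    (e : ℕ → Xs) (xs : ℕ → WeakDual ℝ Xs)
    -- (i) all weak-* limit points of the sequence belong to X̂
    (hlimit : ∀ x : WeakDual ℝ Xs, MapClusterPt x atTop xs → x ∈ Xhat)
    -- (ii) summability of the positive parts of the error pairings
    (hsum : ∀ xbar ∈ Xhat,
      Summable (fun k => max 0 ((xs (k + 1) - xbar) (e k))))
    -- (iii) quasi-Féjér monotonicity of the Bregman divergences with error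
    (hmono : ∀ xstar ∈ Xhat, ∀ k : ℕ,
      M xstar - M (xs (k + 1)) - (xstar - xs (k + 1)) (M' (xs (k + 1)))
        ≤ M xstar - M (xs k) - (xstar - xs k) (M' (xs k))
          + (xs (k + 1) - xstar) (e k)) :
    -- any two weak-* limit points lie in X̂ and pair to zero
    (∀ xhat xbar : WeakDual ℝ Xs,
      MapClusterPt xhat atTop xs → MapClusterPt xbar atTop xs →
      xhat ∈ Xhat ∧ xbar ∈ Xhat ∧ (xhat - xbar) (M' xhat - M' xbar) = 0) ∧
    -- if the sequence is bounded, a weak-* limit point exists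
    ((∃ C : ℝ, ∀ (k : ℕ) (f : Xs), |xs k f| ≤ C * ‖f‖) →
      ∃ xhat : WeakDual ℝ Xs, MapClusterPt xhat atTop xs) ∧
    -- with uniqueness from the pairing condition, the whole sequence converges weakly-*
    ((∃ C : ℝ, ∀ (k : ℕ) (f : Xs), |xs k f| ≤ C * ‖f‖) →
      (∀ xhat xbar : WeakDual ℝ Xs,
        (xhat - xbar) (M' xhat - M' xbar) = 0 → xhat = xbar) →
      ∃ xhat ∈ Xhat, Tendsto xs atTop (nhds xhat)) :=
  opial_bregman_general Xs M M' hconv hgat hwcont Xhat e xs hlimit hsum hmono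
end
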